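/- For 1 ≤ k ≤ N, the coefficient 2·N^{(k-N)/2}·α_{k-1}^{-1}·α_{N-k}^{-1} is bounded above by C · k^{k/2} / (2πe)^{N/2} for an absolute constant C, where α_m = (m+1)ω_{m+1} is the surface area of the unit m-sphere. -/

import Mathlib

open MeasureTheory Real

/-- `unitBallVol n` is the Lebesgue volume of the unit ball in `ℝ^n`. -/
noncomputable def unitBallVol (n : ℕ) : ℝ :=
  (volume (Metric.ball (0 : EuclideanSpace ℝ (Fin n)) 1)).toReal

/-- `sphereVol m = α_m = (m+1)·ω_{m+1}` is the surface area of the unit `m`-sphere. -/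
noncomputable def sphereVol (m : ℕ) : ℝ := (m + 1) * unitBallVol (m + 1)


-- factorial upper bound
lemma fact_ub (j : ℕ) (hj : 1 ≤ j) :
    ((Nat.factorial j) : ℝ) ≤ Real.exp 1 * Real.sqrt j * ((j : ℝ) / Real.exp 1) ^ j := by
  have hd : (0:ℝ) < Real.sqrt (2 * j) * ((j : ℝ) / Real.exp 1) ^ j := by
    have : (0:ℝ) < (j:ℝ) := by exact_mod_cast hj
    positivity
  have hfac : ((Nat.factorial j) : ℝ) = Stirling.stirlingSeq j * (Real.sqrt (2 * j) * ((j:ℝ) / Real.exp 1) ^ j) := by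
    rw [Stirling.stirlingSeq]
    field_simp
  have hmono : Stirling.stirlingSeq j ≤ Stirling.stirlingSeq 1 := by
    obtain ⟨i, rfl⟩ := Nat.exists_eq_add_of_le hj
    simpa [Function.comp, Nat.add_comm] using Stirling.stirlingSeq'_antitone (Nat.zero_le i)
  rw [hfac]
  rw [Stirling.stirlingSeq_one] at hmono
  have h2 : Real.sqrt (2 * j) = Real.sqrt 2 * Real.sqrt j := by
    rw [Real.sqrt_mul (by norm_num)]
  have hs2 : (0:ℝ) < Real.sqrt 2 := by positivity
  calc Stirling.stirlingSeq j * (Real.sqrt (2 * j) * ((j:ℝ) / Real.exp 1) ^ j)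
      ≤ (Real.exp 1 / Real.sqrt 2) * (Real.sqrt (2 * j) * ((j:ℝ) / Real.exp 1) ^ j) := by
        exact mul_le_mul_of_nonneg_right hmono hd.le
    _ = Real.exp 1 * Real.sqrt j * ((j : ℝ) / Real.exp 1) ^ j := by
        rw [h2]; field_simp

-- stirlingSeq lower bound
lemma stirling_lb (j : ℕ) (hj : 1 ≤ j) : Real.sqrt π ≤ Stirling.stirlingSeq j := by
  obtain ⟨i, rfl⟩ := Nat.exists_eq_add_of_le hj
  have := Stirling.stirlingSeq'_antitone.le_of_tendsto
    (Stirling.tendsto_stirlingSeq_sqrt_pi.comp (Filter.tendsto_add_atTop_nat 1)) i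
  simpa [Function.comp, Nat.succ_eq_add_one, Nat.add_comm] using this

lemma fact_lb (j : ℕ) (hj : 1 ≤ j) :
    Real.sqrt j * ((j : ℝ) / Real.exp 1) ^ j ≤ ((Nat.factorial j) : ℝ) := by
  have hjr : (0:ℝ) < (j:ℝ) := by exact_mod_cast hj
  have hfac : ((Nat.factorial j) : ℝ) = Stirling.stirlingSeq j * (Real.sqrt (2 * j) * ((j:ℝ) / Real.exp 1) ^ j) := by
    rw [Stirling.stirlingSeq]; field_simp
  have h1 : (1:ℝ) ≤ Stirling.stirlingSeq j :=
    le_trans (by rw [show (1:ℝ) = Real.sqrt 1 by simp]; exact Real.sqrt_le_sqrt (by linarith [Real.pi_gt_three])) (stirling_lb j hj)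
  have hd : (0:ℝ) ≤ Real.sqrt j * ((j : ℝ) / Real.exp 1) ^ j := by positivity
  rw [hfac]
  calc Real.sqrt j * ((j : ℝ) / Real.exp 1) ^ j
      ≤ Real.sqrt (2*j) * ((j : ℝ) / Real.exp 1) ^ j := by
        apply mul_le_mul_of_nonneg_right _ (by positivity)
        exact Real.sqrt_le_sqrt (by linarith)
    _ ≤ Stirling.stirlingSeq j * (Real.sqrt (2 * j) * ((j:ℝ) / Real.exp 1) ^ j) := by
        nth_rewrite 1 [← one_mul (Real.sqrt (2*j) * _)]
        apply mul_le_mul_of_nonneg_right h1 (by positivity)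

lemma unitBallVol_eq (n : ℕ) :
    unitBallVol (n + 1) = π ^ (((n : ℝ) + 1) / 2) / Real.Gamma (((n : ℝ) + 1) / 2 + 1) := by
  have hg : 0 < Real.Gamma (((n:ℕ):ℝ) / 2 + 1 + 1/2) := by
    apply Real.Gamma_pos_of_pos; positivity
  rw [unitBallVol, EuclideanSpace.volume_ball, Fintype.card_fin]
  rw [ENNReal.ofReal_one, one_pow, one_mul, ENNReal.toReal_ofReal (by positivity)]
  have h1 : Real.sqrt π ^ (n+1) = π ^ (((n:ℝ)+1)/2) := by
    rw [Real.sqrt_eq_rpow, ← Real.rpow_natCast (π ^ ((1:ℝ)/2)) (n+1), ← Real.rpow_mul pi_pos.le]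
    congr 1
    push_cast; ring
  have h2 : ((n+1 : ℕ) : ℝ) / 2 + 1 = ((n:ℝ)+1)/2 + 1 := by push_cast; ring
  rw [h1, h2]

lemma sphereVol_inv (n : ℕ) :
    (sphereVol n)⁻¹ =
      Real.Gamma (((n : ℝ) + 1) / 2 + 1) / (((n : ℝ) + 1) * π ^ (((n : ℝ) + 1) / 2)) := by
  have hg : 0 < Real.Gamma (((n : ℝ) + 1) / 2 + 1) := Real.Gamma_pos_of_pos (by positivity)
  rw [sphereVol, unitBallVol_eq, mul_inv, inv_div]
  field_simp

-- Gamma at half-integers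
lemma gamma_even (j : ℕ) : Real.Gamma ((2 * (j:ℝ)) / 2 + 1) = (Nat.factorial j : ℝ) := by
  rw [show (2 * (j:ℝ)) / 2 + 1 = (j:ℝ) + 1 by ring, Real.Gamma_nat_eq_factorial]

lemma gamma_odd (j : ℕ) :
    Real.Gamma ((2 * (j:ℝ) + 1) / 2 + 1) =
      (Nat.factorial (2*j+1) : ℝ) * (2:ℝ) ^ (-(2*(j:ℝ)+1)) * Real.sqrt π / (Nat.factorial j : ℝ) := by
  have hdup := Real.Gamma_mul_Gamma_add_half ((j:ℝ) + 1)
  have h1 : Real.Gamma ((j:ℝ) + 1) = (Nat.factorial j : ℝ) := Real.Gamma_nat_eq_factorial j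
  have h2 : Real.Gamma (2 * ((j:ℝ) + 1)) = (Nat.factorial (2*j+1) : ℝ) := by
    rw [show 2 * ((j:ℝ)+1) = ((2*j+1 : ℕ) : ℝ) + 1 by push_cast; ring, Real.Gamma_nat_eq_factorial]
  have h3 : (2 * (j:ℝ) + 1) / 2 + 1 = (j:ℝ) + 1 + 1/2 := by ring
  have hfj : (0:ℝ) < (Nat.factorial j : ℝ) := by exact_mod_cast Nat.factorial_pos j
  rw [h3]
  have : Real.Gamma ((j:ℝ) + 1 + 1/2) =
      Real.Gamma (2 * ((j:ℝ)+1)) * (2:ℝ) ^ (1 - 2*((j:ℝ)+1)) * Real.sqrt π / Real.Gamma ((j:ℝ)+1) := by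
    rw [eq_div_iff (by rw [h1]; exact ne_of_gt hfj)]
    linear_combination hdup
  rw [this, h1, h2, show (1 - 2*((j:ℝ)+1)) = -(2*(j:ℝ)+1) by ring]

lemma gamma_le (n : ℕ) :
    Real.Gamma (((n:ℝ) + 1) / 2 + 1) ≤
      Real.exp 3 * (((n:ℝ) + 1) / 2) ^ ((1:ℝ)/2) *
        (((n:ℝ) + 1) / (2 * Real.exp 1)) ^ (((n:ℝ) + 1) / 2) := by
  rcases Nat.even_or_odd (n + 1) with ⟨j, hj⟩ | ⟨j, hj⟩
  · -- n + 1 = 2j, j ≥ 1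
    have hj1 : 1 ≤ j := by omega
    have hJ : (1:ℝ) ≤ (j:ℝ) := by exact_mod_cast hj1
    have hn : (n:ℝ) + 1 = 2 * (j:ℝ) := by
      have : n + 1 = 2 * j := by omega
      exact_mod_cast this
    rw [hn, gamma_even]
    have e1 : (2*(j:ℝ))/2 = (j:ℝ) := by ring
    have e2 : (2*(j:ℝ))/(2*Real.exp 1) = (j:ℝ)/Real.exp 1 := by
      rw [mul_div_mul_left _ _ two_ne_zero]
    rw [e1, e2, Real.rpow_natCast ((j:ℝ)/Real.exp 1) j, ← Real.sqrt_eq_rpow]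
    refine (fact_ub j hj1).trans ?_
    have h13 : Real.exp 1 ≤ Real.exp 3 := Real.exp_le_exp.mpr (by norm_num)
    have hx : (0:ℝ) ≤ ((j:ℝ)/Real.exp 1)^j := by positivity
    have hs : (0:ℝ) ≤ Real.sqrt j := Real.sqrt_nonneg _
    nlinarith [mul_le_mul_of_nonneg_right (mul_le_mul_of_nonneg_right h13 hs) hx]
  · -- n + 1 = 2j + 1
    have hn : (n:ℝ) + 1 = 2 * (j:ℝ) + 1 := by
      have : n + 1 = 2 * j + 1 := by omega
      exact_mod_cast this
    rw [hn, gamma_odd]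
    rcases Nat.eq_zero_or_pos j with rfl | hj1
    · -- j = 0 : Γ(3/2) = √π / 2
      norm_num
      rw [show (Real.exp 1)⁻¹ * ((1:ℝ)/2) = 1/(2*Real.exp 1) by field_simp]
      have hsq : Real.sqrt π ≤ 2 := by
        have h4 : Real.sqrt π ≤ Real.sqrt 4 := Real.sqrt_le_sqrt (by linarith [Real.pi_le_four])
        rwa [show (4:ℝ) = 2^2 by norm_num, Real.sqrt_sq (by norm_num)] at h4
      have hhalf : ((1:ℝ)/2) ≤ ((1:ℝ)/2) ^ ((1:ℝ)/2) := by
        nth_rewrite 1 [show ((1:ℝ)/2) = ((1:ℝ)/2) ^ ((1:ℝ)) by norm_num]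
        exact Real.rpow_le_rpow_of_exponent_ge (by norm_num) (by norm_num) (by norm_num)
      have he1 : (1:ℝ) ≤ Real.exp 1 := by linarith [Real.add_one_le_exp 1, Real.exp_pos 1]
      have hout : (1:ℝ)/(2*Real.exp 1) ≤ (1/(2*Real.exp 1)) ^ ((1:ℝ)/2) := by
        nth_rewrite 1 [show (1:ℝ)/(2*Real.exp 1) = ((1:ℝ)/(2*Real.exp 1)) ^ ((1:ℝ)) by norm_num]
        refine Real.rpow_le_rpow_of_exponent_ge (by positivity) ?_ (by norm_num)
        rw [div_le_one (by positivity)]; linarith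
      have hrhs : Real.exp 3 * ((1:ℝ)/2) * (1/(2*Real.exp 1)) ≤
          Real.exp 3 * ((1:ℝ)/2) ^ ((1:ℝ)/2) * ((1:ℝ)/(2*Real.exp 1)) ^ ((1:ℝ)/2) := by
        exact mul_le_mul (mul_le_mul_of_nonneg_left hhalf (Real.exp_pos 3).le) hout
          (by positivity) (by positivity)
      have hexp3 : Real.exp 3 = Real.exp 1 * Real.exp 1 * Real.exp 1 := by
        rw [← Real.exp_add, ← Real.exp_add]; norm_num
      have hlow : (1:ℝ) ≤ Real.exp 3 * ((1:ℝ)/2) * (1/(2*Real.exp 1)) := by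
        rw [hexp3]
        rw [show Real.exp 1 * Real.exp 1 * Real.exp 1 * ((1:ℝ)/2) * (1/(2*Real.exp 1))
            = (Real.exp 1 * Real.exp 1) / 4 * (Real.exp 1 / Real.exp 1) by ring]
        rw [div_self (ne_of_gt (Real.exp_pos 1)), mul_one]
        nlinarith [Real.exp_one_gt_d9]
      linarith
    · -- j ≥ 1
      obtain ⟨i, rfl⟩ := Nat.exists_eq_add_of_le hj1
      have hJ : (1:ℝ) ≤ ((1+i:ℕ):ℝ) := by exact_mod_cast hj1
      have hJ0 : (0:ℝ) < ((1+i:ℕ):ℝ) := by positivity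
      have hub := fact_ub (2*(1+i)+1) (by omega)
      have hlb := fact_lb (1+i) hj1
      have hcast : ((2*(1+i)+1 : ℕ):ℝ) = 2*((1+i:ℕ):ℝ)+1 := by push_cast; ring
      rw [hcast] at hub
      have hmid : (Nat.factorial (2*(1+i)+1) : ℝ) * (2:ℝ)^(-(2*((1+i:ℕ):ℝ)+1)) * Real.sqrt π
            / (Nat.factorial (1+i) : ℝ)
          ≤ (Real.exp 1 * Real.sqrt (2*((1+i:ℕ):ℝ)+1) * ((2*((1+i:ℕ):ℝ)+1)/Real.exp 1)^(2*(1+i)+1))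
              * (2:ℝ)^(-(2*((1+i:ℕ):ℝ)+1)) * Real.sqrt π
            / (Real.sqrt ((1+i:ℕ):ℝ) * (((1+i:ℕ):ℝ)/Real.exp 1)^(1+i)) := by
        gcongr <;> first
          | exact mul_pos (Real.sqrt_pos.mpr hJ0) (by positivity)
          | exact hub
          | exact hlb
      refine hmid.trans ?_
      have hlogx : Real.log (2*((1+i:ℕ):ℝ)+1) - Real.log 2 - Real.log ((1+i:ℕ):ℝ)
          ≤ 1/(2*((1+i:ℕ):ℝ)) := by
        have hx := Real.log_le_sub_one_of_pos
          (show (0:ℝ) < (2*((1+i:ℕ):ℝ)+1)/(2*((1+i:ℕ):ℝ)) by positivity)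
        rw [Real.log_div (by positivity) (by positivity),
            Real.log_mul (by norm_num) (by positivity)] at hx
        have he : (2*((1+i:ℕ):ℝ)+1)/(2*((1+i:ℕ):ℝ)) - 1 = 1/(2*((1+i:ℕ):ℝ)) := by
          field_simp
          ring
        linarith
      have h2 : (((1+i:ℕ):ℝ)+1/2) *
          (Real.log (2*((1+i:ℕ):ℝ)+1) - Real.log 2 - Real.log ((1+i:ℕ):ℝ)) ≤ 3/4 := by
        have ha := mul_le_mul_of_nonneg_left hlogx
          (show (0:ℝ) ≤ ((1+i:ℕ):ℝ)+1/2 by positivity)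
        have hb : (((1+i:ℕ):ℝ)+1/2) * (1/(2*((1+i:ℕ):ℝ))) ≤ 3/4 := by
          rw [mul_one_div, div_le_iff₀ (by positivity)]
          linarith
        linarith
      have hπ : Real.log π + Real.log 2 ≤ 2 := by
        have hl : Real.log (π*2) ≤ 2 := by
          rw [Real.log_le_iff_le_exp (by positivity)]
          have h1 : Real.exp 2 = Real.exp 1 * Real.exp 1 := by rw [← Real.exp_add]; norm_num
          nlinarith [Real.exp_one_gt_d9, Real.pi_lt_d2]
        rw [Real.log_mul (by positivity) (by norm_num)] at hl
        linarith
      have hlogj : 0 ≤ Real.log ((1+i:ℕ):ℝ) := Real.log_nonneg hJ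
      have hlog2 : 0 ≤ Real.log 2 := Real.log_nonneg (by norm_num)
      rw [← Real.log_le_log_iff (by positivity) (by positivity)]
      simp (disch := positivity) only [Real.log_mul, Real.log_div, Real.log_rpow, Real.log_pow,
        Real.log_exp, Real.log_sqrt]
      push_cast at h2 hlogj ⊢
      linarith [h2, hπ, hlogj, hlog2]

/-- There is an absolute constant `C` such that for all `1 ≤ k ≤ N`,
`2·N^{(k-N)/2}·α_{k-1}⁻¹·α_{N-k}⁻¹ ≤ C·k^{k/2}/(2πe)^{N/2}`. -/
theorem coefficient_bound :
    ∃ C : ℝ, 0 < C ∧ ∀ N k : ℕ, 1 ≤ k → k ≤ N →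
      2 * (N : ℝ) ^ (((k : ℝ) - (N : ℝ)) / 2) * (sphereVol (k - 1))⁻¹ * (sphereVol (N - k))⁻¹
        ≤ C * (k : ℝ) ^ ((k : ℝ) / 2) / (2 * π * Real.exp 1) ^ ((N : ℝ) / 2) := by
  refine ⟨Real.exp 6, Real.exp_pos 6, ?_⟩
  intro N k hk hkN
  obtain ⟨k', rfl⟩ := Nat.exists_eq_add_of_le hk
  obtain ⟨m', rfl⟩ := Nat.exists_eq_add_of_le hkN
  have h1 : 1 + k' - 1 = k' := by omega
  have h2 : 1 + k' + m' - (1 + k') = m' := by omega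
  rw [h1, h2, sphereVol_inv, sphereVol_inv]
  have hstep : 2 * ((1 + k' + m':ℕ) : ℝ) ^ ((((1+k':ℕ):ℝ) - ((1+k'+m':ℕ):ℝ)) / 2) *
      (Real.Gamma (((k' : ℝ) + 1) / 2 + 1) / (((k' : ℝ) + 1) * π ^ (((k' : ℝ) + 1) / 2))) *
      (Real.Gamma (((m' : ℝ) + 1) / 2 + 1) / (((m' : ℝ) + 1) * π ^ (((m' : ℝ) + 1) / 2)))
      ≤ 2 * ((1 + k' + m':ℕ) : ℝ) ^ ((((1+k':ℕ):ℝ) - ((1+k'+m':ℕ):ℝ)) / 2) *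
      ((Real.exp 3 * (((k':ℝ) + 1) / 2) ^ ((1:ℝ)/2) *
        (((k':ℝ) + 1) / (2 * Real.exp 1)) ^ (((k':ℝ) + 1) / 2))
          / (((k' : ℝ) + 1) * π ^ (((k' : ℝ) + 1) / 2))) *
      ((Real.exp 3 * (((m':ℝ) + 1) / 2) ^ ((1:ℝ)/2) *
        (((m':ℝ) + 1) / (2 * Real.exp 1)) ^ (((m':ℝ) + 1) / 2))
          / (((m' : ℝ) + 1) * π ^ (((m' : ℝ) + 1) / 2))) := by
    gcongr <;> first
      | exact Real.Gamma_pos_of_pos (by positivity)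
      | exact gamma_le k'
      | exact gamma_le m'
  refine hstep.trans ?_
  rw [← Real.log_le_log_iff (by positivity) (by positivity)]
  simp (disch := positivity) only [Real.log_mul, Real.log_div, Real.log_rpow, Real.log_exp]
  have f1 : ((m':ℝ)+1) * Real.log ((m':ℝ)+1) ≤ ((m':ℝ)+1) * Real.log ((k':ℝ)+(m':ℝ)+1) :=
    mul_le_mul_of_nonneg_left (Real.log_le_log (by positivity) (by linarith)) (by positivity)
  have f2 : Real.log ((k':ℝ)+(m':ℝ)+1) ≤ Real.log ((k':ℝ)+1) + Real.log ((m':ℝ)+1) := by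
    rw [← Real.log_mul (by positivity) (by positivity)]
    apply Real.log_le_log (by positivity)
    nlinarith [mul_nonneg (Nat.cast_nonneg k' : (0:ℝ) ≤ k') (Nat.cast_nonneg m' : (0:ℝ) ≤ m')]
  have f3 : 0 ≤ Real.log ((k':ℝ)+1) := Real.log_nonneg (by linarith [(Nat.cast_nonneg k' : (0:ℝ) ≤ k')])
  have f4 : 0 ≤ Real.log ((m':ℝ)+1) := Real.log_nonneg (by linarith [(Nat.cast_nonneg m' : (0:ℝ) ≤ m')])
  have f5 : 0 ≤ Real.log π := Real.log_nonneg (by linarith [Real.pi_gt_three])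
  have f6 : 0 ≤ Real.log 2 := Real.log_nonneg (by norm_num)
  push_cast at f1 f2 f3 f4 ⊢
  ring_nf at f1 f2 ⊢
  linarith [f1, f2, f3, f4, f5, f6]
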